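/- For any discrete random variables Z and H₁,…,H_k on finite spaces, J(Z; (H₁,…,H_k)) ≤ Σ_{t=1}^{k} J(Z; H_t | (H₁,…,H_{t−1})), where the t=1 term is the unconditional variational information J(Z; H₁). -/

import Mathlib

/-!
Write `W = (H₁, …, H_{k-1})` and `Y = H_k`; by induction it suffices to show
`J(Z; (Y, W)) ≤ J(Z; W) + J(Z; Y | W)`. Compare the joint law `P(Z, Y, W)` with `P(Z) ⊗ P(Y, W)`
through the intermediate law `P(Z, W) P(Y, W) / P(W)`. By the triangle inequality the distance
splits into two parts: the first is `J(Z; Y | W)`, and in the second the factor `P(Y, W)` sums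
out over `Y`, leaving exactly `J(Z; W)`.
-/

open scoped Classical BigOperators

/-- `μ` is a probability mass function on a finite type. -/
def IsPMF {Ω : Type*} [Fintype Ω] (μ : Ω → ℝ) : Prop :=
  (∀ ω, 0 ≤ μ ω) ∧ ∑ ω, μ ω = 1

/-- Probability that the random variable `X` takes the value `a` under `μ`. -/
noncomputable def pr {Ω α : Type*} [Fintype Ω] (μ : Ω → ℝ) (X : Ω → α) (a : α) : ℝ :=
  ∑ ω, if X ω = a then μ ω else 0

/-- Variational information `J(X;Y)`: total variation distance between the joint
law of `(X,Y)` and the product of the marginal laws. -/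
noncomputable def vinfo {Ω α β : Type*} [Fintype Ω] [Fintype α] [Fintype β]
    (μ : Ω → ℝ) (X : Ω → α) (Y : Ω → β) : ℝ :=
  (1/2) * ∑ a, ∑ b, |pr μ (fun ω => (X ω, Y ω)) (a, b) - pr μ X a * pr μ Y b|

/-- Conditional variational information `J(X;Y|W)`:
`E_W[d_TV(P(X,Y|W), P(X|W)⊗P(Y|W))]`. -/
noncomputable def condVinfo {Ω α β γ : Type*} [Fintype Ω] [Fintype α] [Fintype β] [Fintype γ]
    (μ : Ω → ℝ) (X : Ω → α) (Y : Ω → β) (W : Ω → γ) : ℝ :=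
  (1/2) * ∑ c, ∑ a, ∑ b,
    |pr μ (fun ω => (X ω, Y ω, W ω)) (a, b, c) -
      pr μ (fun ω => (X ω, W ω)) (a, c) * pr μ (fun ω => (Y ω, W ω)) (b, c) / pr μ W c|

lemma mul_abs_div_sub_eq_abs_sub_mul {q s z : ℝ} (hs : 0 ≤ s) (hq : s = 0 → q = 0) :
    s * |q / s - z| = |q - z * s| := by
  rcases hs.eq_or_lt with rfl | hs
  · simp [hq rfl]
  · rw [← abs_of_pos hs, ← abs_mul, abs_of_pos hs, mul_sub, mul_div_cancel₀ q hs.ne', mul_comm]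

section pr

variable {Ω α β γ : Type*} [Fintype Ω] {μ : Ω → ℝ}

lemma pr_nonneg (h0 : ∀ ω, 0 ≤ μ ω) (X : Ω → α) (a : α) : 0 ≤ pr μ X a :=
  Finset.sum_nonneg fun ω _ => by split_ifs; exacts [h0 ω, le_rfl]

lemma pr_comp_of_injective {f : α → β} (hf : Function.Injective f) (X : Ω → α) (a : α) :
    pr μ (fun ω => f (X ω)) (f a) = pr μ X a := by
  simp only [pr, hf.eq_iff]

lemma sum_pr_pair [Fintype β] (Y : Ω → β) (W : Ω → γ) (c : γ) :
    ∑ b, pr μ (fun ω => (Y ω, W ω)) (b, c) = pr μ W c := by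
  unfold pr
  rw [Finset.sum_comm]
  refine Finset.sum_congr rfl fun ω _ => ?_
  by_cases h : W ω = c <;> simp [Prod.ext_iff, h]

lemma pr_pair_eq_zero_of_pr_eq_zero [Fintype β] (h0 : ∀ ω, 0 ≤ μ ω) (Y : Ω → β) {W : Ω → γ}
    {c : γ} (hc : pr μ W c = 0) (b : β) : pr μ (fun ω => (Y ω, W ω)) (b, c) = 0 := by
  refine le_antisymm ?_ (pr_nonneg h0 _ _)
  rw [← hc, ← sum_pr_pair Y W c]
  exact Finset.single_le_sum (fun b _ => pr_nonneg h0 _ (b, c)) (Finset.mem_univ b)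

lemma sum_abs_pr_mul_div_sub [Fintype α] [Fintype β] (h0 : ∀ ω, 0 ≤ μ ω)
    (Z : Ω → α) (Y : Ω → β) (W : Ω → γ) (a : α) (c : γ) :
    ∑ b, |pr μ (fun ω => (Z ω, W ω)) (a, c) * pr μ (fun ω => (Y ω, W ω)) (b, c) / pr μ W c
        - pr μ Z a * pr μ (fun ω => (Y ω, W ω)) (b, c)|
      = |pr μ (fun ω => (Z ω, W ω)) (a, c) - pr μ Z a * pr μ W c| := by
  have hterm : ∀ b, |pr μ (fun ω => (Z ω, W ω)) (a, c) * pr μ (fun ω => (Y ω, W ω)) (b, c)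
        / pr μ W c - pr μ Z a * pr μ (fun ω => (Y ω, W ω)) (b, c)|
      = pr μ (fun ω => (Y ω, W ω)) (b, c)
          * |pr μ (fun ω => (Z ω, W ω)) (a, c) / pr μ W c - pr μ Z a| := by
    intro b
    rw [← abs_of_nonneg (pr_nonneg h0 _ (b, c)), ← abs_mul, abs_of_nonneg (pr_nonneg h0 _ (b, c))]
    ring_nf
  rw [Finset.sum_congr rfl fun b _ => hterm b, ← Finset.sum_mul, sum_pr_pair]
  exact mul_abs_div_sub_eq_abs_sub_mul (pr_nonneg h0 W c)
    fun hc => by simpa using pr_pair_eq_zero_of_pr_eq_zero h0 Z hc a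

end pr

section vinfo

variable {Ω α β γ : Type*} [Fintype Ω] [Fintype α] [Fintype β] [Fintype γ] {μ : Ω → ℝ}

lemma vinfo_comp_equiv (e : β ≃ γ) (X : Ω → α) (Y : Ω → β) :
    vinfo μ X (fun ω => e (Y ω)) = vinfo μ X Y := by
  unfold vinfo
  congr 1
  refine Finset.sum_congr rfl fun a _ => ?_
  rw [← e.sum_comp]
  refine Finset.sum_congr rfl fun b _ => ?_
  have hpair : pr μ (fun ω => (X ω, e (Y ω))) (a, e b) = pr μ (fun ω => (X ω, Y ω)) (a, b) :=
    pr_comp_of_injective (f := Prod.map id e) (Function.injective_id.prodMap e.injective)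
      (fun ω => (X ω, Y ω)) (a, b)
  rw [hpair, pr_comp_of_injective e.injective]

lemma vinfo_of_subsingleton [Subsingleton β] (h1 : ∑ ω, μ ω = 1) (X : Ω → α) (Y : Ω → β) :
    vinfo μ X Y = 0 := by
  have hY : ∀ b, pr μ Y b = 1 := fun b => by simpa [pr, Subsingleton.elim _ b] using h1
  have hXY : ∀ a b, pr μ (fun ω => (X ω, Y ω)) (a, b) = pr μ X a := fun a b => by
    simp [pr, Prod.ext_iff, Subsingleton.elim _ b]
  simp [vinfo, hY, hXY]

lemma vinfo_pair_le (h0 : ∀ ω, 0 ≤ μ ω) (Z : Ω → α) (Y : Ω → β) (W : Ω → γ) :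
    vinfo μ Z (fun ω => (Y ω, W ω)) ≤ vinfo μ Z W + condVinfo μ Z Y W := by
  calc vinfo μ Z (fun ω => (Y ω, W ω))
      = 1/2 * ∑ a, ∑ c, ∑ b, |pr μ (fun ω => (Z ω, Y ω, W ω)) (a, b, c)
          - pr μ Z a * pr μ (fun ω => (Y ω, W ω)) (b, c)| := by
        simp only [vinfo, Fintype.sum_prod_type]
        exact congrArg _ (Finset.sum_congr rfl fun a _ => Finset.sum_comm)
    _ ≤ 1/2 * ∑ a, ∑ c, ∑ b,
          (|pr μ (fun ω => (Z ω, W ω)) (a, c) * pr μ (fun ω => (Y ω, W ω)) (b, c) / pr μ W c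
              - pr μ Z a * pr μ (fun ω => (Y ω, W ω)) (b, c)|
            + |pr μ (fun ω => (Z ω, Y ω, W ω)) (a, b, c)
              - pr μ (fun ω => (Z ω, W ω)) (a, c) * pr μ (fun ω => (Y ω, W ω)) (b, c)
                / pr μ W c|) := by
        gcongr with a _ c _ b _
        exact (abs_sub_le _ _ _).trans_eq (add_comm _ _)
    _ = vinfo μ Z W + condVinfo μ Z Y W := by
        simp only [Finset.sum_add_distrib, sum_abs_pr_mul_div_sub h0, vinfo, condVinfo]
        rw [mul_add]
        congr 2
        exact Finset.sum_comm

end vinfo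

/-- Chain rule for variational information:
`J(Z;(H₁,…,H_k)) ≤ Σ_t J(Z;H_t | (H₁,…,H_{t-1}))`, where the `t = 0` (first) term
conditions on the empty prefix, i.e. it is the unconditional variational information. -/
theorem chain_rule {Ω 𝒵 : Type*} [Fintype Ω] [Fintype 𝒵] {k : ℕ}
    (𝓗 : Fin k → Type) [∀ i, Fintype (𝓗 i)]
    (μ : Ω → ℝ) (hμ : IsPMF μ) (Z : Ω → 𝒵) (H : ∀ i, Ω → 𝓗 i) :
    vinfo μ Z (fun ω => fun i => H i ω) ≤
      ∑ t : Fin k, condVinfo μ Z (H t)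
        (fun ω => fun i : Fin t.val => H (Fin.castLE t.isLt.le i) ω) := by
  induction k with
  | zero => simp [vinfo_of_subsingleton hμ.2]
  | succ k ih =>
    rw [Fin.sum_univ_castSucc]
    calc vinfo μ Z (fun ω i => H i ω)
        = vinfo μ Z (fun ω => (H (Fin.last k) ω, fun i : Fin k => H i.castSucc ω)) :=
          (vinfo_comp_equiv (Fin.snocEquiv 𝓗).symm Z _).symm
      _ ≤ vinfo μ Z (fun ω (i : Fin k) => H i.castSucc ω)
            + condVinfo μ Z (H (Fin.last k)) (fun ω (i : Fin k) => H i.castSucc ω) :=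
          vinfo_pair_le hμ.1 Z _ _
      _ ≤ _ := add_le_add_left (ih (fun i => 𝓗 i.castSucc) (fun i => H i.castSucc)) _
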